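/- For every natural number k, the following identity of real numbers holds: ∑_{j=0}^{k} [(3/4)_j / ((−1/4)_j · j!)] · [(3/4)_{k−j} / ((−1/4)_{k−j} · (k−j)!)] = [(√3/2)_k · (−√3/2)_k] / [(√3/2 − 1)_k · (−√3/2 − 1)_k] · 2^k / k!. (All Pochhammer symbols in the denominators are nonzero, since −1/4, √3/2 − 1 and −√3/2 − 1 are not nonpositive integers.) -/
import Mathlib

open Finset

/-- Rising factorial (Pochhammer symbol) `(z)_n` over the reals. -/
noncomputable def poch (z : ℝ) (n : ℕ) : ℝ := (ascPochhammer ℝ n).eval z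

lemma poch_zero (z : ℝ) : poch z 0 = 1 := by simp [poch]

lemma poch_succ (z : ℝ) (n : ℕ) : poch z (n + 1) = poch z n * (z + n) := by
  simpa [poch, mul_comm] using ascPochhammer_succ_eval n z

lemma poch_neg_quarter_ne (j : ℕ) : poch (-1 / 4) j ≠ 0 := by
  induction j with
  | zero => simp [poch_zero]
  | succ n ih =>
    rw [poch_succ]
    refine mul_ne_zero ih ?_
    rcases n with _ | m
    · norm_num
    · have : (1 : ℝ) ≤ ((m + 1 : ℕ) : ℝ) := by exact_mod_cast Nat.one_le_iff_ne_zero.2 (by simp)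
      push_cast at this ⊢
      nlinarith

lemma poch_ratio (j : ℕ) : poch (3 / 4) j = (1 - 4 * j) * poch (-1 / 4) j := by
  induction j with
  | zero => simp [poch_zero]
  | succ n ih =>
    rw [poch_succ, poch_succ, ih]
    push_cast
    ring

lemma term_eq (j : ℕ) :
    poch (3 / 4) j / (poch (-1 / 4) j * (j.factorial : ℝ)) = (1 - 4 * j) / (j.factorial : ℝ) := by
  rw [poch_ratio]
  rw [div_eq_div_iff (mul_ne_zero (poch_neg_quarter_ne j) (by positivity))
    (by positivity : (j.factorial : ℝ) ≠ 0)]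
  ring

lemma sumA (k : ℕ) : ∑ j ∈ range (k + 1), (k.choose j : ℝ) = 2 ^ k := by
  exact_mod_cast congrArg (Nat.cast : ℕ → ℝ) (Nat.sum_range_choose k)

lemma sumN (k : ℕ) :
    ∑ j ∈ range (k + 1), (k.choose j : ℝ) * (1 - 4 * j) = 2 ^ k * (1 - 2 * k) := by
  induction k with
  | zero => simp
  | succ n ih =>
    have h := Finset.sum_choose_succ_mul (fun i _ => (1 - 4 * (i : ℝ))) n
    rw [h]
    have h2 : ∑ i ∈ range (n + 1), (n.choose i : ℝ) * (1 - 4 * ((i : ℝ) + 1))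
        = ∑ i ∈ range (n + 1), ((n.choose i : ℝ) * (1 - 4 * i) - 4 * (n.choose i : ℝ)) := by
      apply sum_congr rfl; intro i _; push_cast; ring
    push_cast
    rw [h2, Finset.sum_sub_distrib, ih, ← Finset.mul_sum, sumA]
    push_cast
    ring

lemma sumN' (k : ℕ) :
    ∑ j ∈ range (k + 1), (k.choose j : ℝ) * (1 - 4 * ((k - j : ℕ) : ℝ))
      = 2 ^ k * (1 - 2 * k) := by
  rw [← sumN k, ← Finset.sum_range_reflect (fun j => (k.choose j : ℝ) * (1 - 4 * ((k - j : ℕ) : ℝ))) (k + 1)]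
  apply sum_congr rfl
  intro j hj
  have hj' : j ≤ k := Nat.lt_succ_iff.mp (mem_range.mp hj)
  simp only [Nat.add_sub_cancel]
  rw [Nat.choose_symm hj', Nat.sub_sub_self hj']

lemma sumM (k : ℕ) :
    ∑ j ∈ range (k + 1), (k.choose j : ℝ) * (1 - 4 * j) * (1 - 4 * ((k - j : ℕ) : ℝ))
      = 2 ^ k * (4 * k ^ 2 - 8 * k + 1) := by
  induction k with
  | zero => simp
  | succ n ih =>
    have h := Finset.sum_choose_succ_mul
      (fun i j => (1 - 4 * (i : ℝ)) * (1 - 4 * (j : ℝ))) n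
    have hL : ∑ j ∈ range (n + 1 + 1), ((n+1).choose j : ℝ) * (1 - 4 * j) * (1 - 4 * ((n + 1 - j : ℕ) : ℝ))
        = ∑ i ∈ range (n + 2), ((n + 1).choose i : ℝ) * ((1 - 4 * (i : ℝ)) * (1 - 4 * ((n + 1 - i : ℕ) : ℝ))) := by
      apply sum_congr rfl; intro i _; ring
    rw [hL, h]
    have e1 : ∑ i ∈ range (n + 1), (n.choose i : ℝ) * ((1 - 4 * (i : ℝ)) * (1 - 4 * ((n + 1 - i : ℕ) : ℝ)))
        = ∑ i ∈ range (n + 1), ((n.choose i : ℝ) * (1 - 4 * i) * (1 - 4 * ((n - i : ℕ) : ℝ))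
            - 4 * ((n.choose i : ℝ) * (1 - 4 * i))) := by
      apply sum_congr rfl
      intro i hi
      have hi' : i ≤ n := Nat.lt_succ_iff.mp (mem_range.mp hi)
      rw [Nat.succ_sub hi']
      push_cast
      ring
    have e2 : ∑ i ∈ range (n + 1), (n.choose i : ℝ) * ((1 - 4 * ((i : ℕ) + 1 : ℕ) ) * (1 - 4 * ((n - i : ℕ) : ℝ)))
        = ∑ i ∈ range (n + 1), ((n.choose i : ℝ) * (1 - 4 * i) * (1 - 4 * ((n - i : ℕ) : ℝ))
            - 4 * ((n.choose i : ℝ) * (1 - 4 * ((n - i : ℕ) : ℝ)))) := by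
      apply sum_congr rfl; intro i _; push_cast; ring
    rw [e1, e2, Finset.sum_sub_distrib, Finset.sum_sub_distrib, ih,
      ← Finset.mul_sum, ← Finset.mul_sum, sumN, sumN']
    push_cast
    ring

theorem stmt_10 (k : ℕ) :
    ∑ j ∈ Finset.range (k + 1),
      (poch (3 / 4) j / (poch (-1 / 4) j * (j.factorial : ℝ))) *
        (poch (3 / 4) (k - j) / (poch (-1 / 4) (k - j) * ((k - j).factorial : ℝ)))
      = (poch (Real.sqrt 3 / 2) k * poch (-Real.sqrt 3 / 2) k) /
          (poch (Real.sqrt 3 / 2 - 1) k * poch (-Real.sqrt 3 / 2 - 1) k)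
        * 2 ^ k / (k.factorial : ℝ) := by
  -- RHS ratio
  have hs3 : Real.sqrt 3 * Real.sqrt 3 = 3 := Real.mul_self_sqrt (by norm_num)
  have key : ∀ n : ℕ,
      poch (Real.sqrt 3 / 2) n * poch (-Real.sqrt 3 / 2) n
        = poch (Real.sqrt 3 / 2 - 1) n * poch (-Real.sqrt 3 / 2 - 1) n
          * (4 * (((n : ℝ) - 1) ^ 2 - 3 / 4)) ∧
      poch (Real.sqrt 3 / 2 - 1) n * poch (-Real.sqrt 3 / 2 - 1) n ≠ 0 := by
    intro n
    induction n with
    | zero => constructor <;> simp [poch_zero] <;> norm_num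
    | succ m ih =>
      obtain ⟨ih1, ih2⟩ := ih
      have hfac : (Real.sqrt 3 / 2 - 1 + m) * (-Real.sqrt 3 / 2 - 1 + m)
          = ((m : ℝ) - 1) ^ 2 - 3 / 4 := by linear_combination (-(1:ℝ)/4) * hs3
      have hfacne : ((m : ℝ) - 1) ^ 2 - 3 / 4 ≠ 0 := by
        rcases m with _ | _ | l
        · norm_num
        · norm_num
        · have : (1 : ℝ) ≤ ((l + 1 : ℕ) : ℝ) := by exact_mod_cast Nat.one_le_iff_ne_zero.2 (by simp)
          push_cast at this ⊢
          nlinarith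
      constructor
      · rw [poch_succ, poch_succ, poch_succ, poch_succ]
        have : poch (Real.sqrt 3 / 2) m * (Real.sqrt 3 / 2 + m) *
            (poch (-Real.sqrt 3 / 2) m * (-Real.sqrt 3 / 2 + m))
            = (poch (Real.sqrt 3 / 2) m * poch (-Real.sqrt 3 / 2) m) * ((m:ℝ)^2 - 3/4) := by
          linear_combination (poch (Real.sqrt 3 / 2) m * poch (-Real.sqrt 3 / 2) m) * (-(1:ℝ)/4) * hs3
        rw [this, ih1]
        have : (poch (Real.sqrt 3 / 2 - 1) m * (Real.sqrt 3 / 2 - 1 + m)) *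
            (poch (-Real.sqrt 3 / 2 - 1) m * (-Real.sqrt 3 / 2 - 1 + m))
            = (poch (Real.sqrt 3 / 2 - 1) m * poch (-Real.sqrt 3 / 2 - 1) m) *
              (((m : ℝ) - 1) ^ 2 - 3 / 4) := by rw [← hfac]; ring
        rw [this]
        push_cast
        ring
      · rw [poch_succ, poch_succ]
        have : (poch (Real.sqrt 3 / 2 - 1) m * (Real.sqrt 3 / 2 - 1 + m)) *
            (poch (-Real.sqrt 3 / 2 - 1) m * (-Real.sqrt 3 / 2 - 1 + m))
            = (poch (Real.sqrt 3 / 2 - 1) m * poch (-Real.sqrt 3 / 2 - 1) m) *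
              (((m : ℝ) - 1) ^ 2 - 3 / 4) := by rw [← hfac]; ring
        rw [this]
        exact mul_ne_zero ih2 hfacne
  obtain ⟨hk1, hk2⟩ := key k
  have hratio : poch (Real.sqrt 3 / 2) k * poch (-Real.sqrt 3 / 2) k /
      (poch (Real.sqrt 3 / 2 - 1) k * poch (-Real.sqrt 3 / 2 - 1) k)
      = 4 * (((k : ℝ) - 1) ^ 2 - 3 / 4) := by
    rw [hk1, mul_comm, mul_div_assoc, div_self hk2, mul_one]
  -- LHS
  have hterm : ∀ j ∈ Finset.range (k + 1),
      (poch (3 / 4) j / (poch (-1 / 4) j * (j.factorial : ℝ))) *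
        (poch (3 / 4) (k - j) / (poch (-1 / 4) (k - j) * ((k - j).factorial : ℝ)))
      = (k.choose j : ℝ) * (1 - 4 * j) * (1 - 4 * ((k - j : ℕ) : ℝ)) / (k.factorial : ℝ) := by
    intro j hj
    have hj' : j ≤ k := Nat.lt_succ_iff.mp (Finset.mem_range.mp hj)
    rw [term_eq, term_eq, Nat.cast_choose ℝ hj']
    have h1 : (j.factorial : ℝ) ≠ 0 := by positivity
    have h2 : ((k - j).factorial : ℝ) ≠ 0 := by positivity
    have h3 : (k.factorial : ℝ) ≠ 0 := by positivity
    field_simp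
  rw [Finset.sum_congr rfl hterm, ← Finset.sum_div, sumM, hratio]
  ring
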